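/- There exists an absolute constant C > 0 such that for X ~ Poisson(λ) and real numbers b ≥ a ≥ 0, Var[X·√(min(X,a)·min(X,b))·1(X ≥ 4)] ≤ C·max(ab, √a·b, √(ab))·E[X·√(min(X,a)·min(X,b))·1(X ≥ 4)]. -/

import Mathlib

open ProbabilityTheory
open scoped NNReal

/-- Expectation of `f X` for `X ~ Poisson(r)`. -/
noncomputable def pev (r : ℝ≥0) (f : ℕ → ℝ) : ℝ :=
  ∑' x : ℕ, f x * poissonPMFReal r x

/-- Variance of `f X` for `X ~ Poisson(r)`. -/
noncomputable def pvar (r : ℝ≥0) (f : ℕ → ℝ) : ℝ :=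
  pev r (fun x => f x ^ 2) - (pev r f) ^ 2

/-- The function `x ↦ x √(min(x,a) min(x,b)) 1(x ≥ 4)`. -/
noncomputable def fab (a b : ℝ) (x : ℕ) : ℝ :=
  if 4 ≤ x then (x : ℝ) * Real.sqrt (min (x : ℝ) a * min (x : ℝ) b) else 0

/-- Auxiliary: `√(min(x,a) min(x,b)) 1(x ≥ 4)`. -/
noncomputable def gab (a b : ℝ) (x : ℕ) : ℝ :=
  if 4 ≤ x then Real.sqrt (min (x : ℝ) a * min (x : ℝ) b) else 0

lemma fab_eq_mul (a b : ℝ) (x : ℕ) : fab a b x = (x : ℝ) * gab a b x := by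
  unfold fab gab; split <;> simp

lemma gab_nonneg (a b : ℝ) (x : ℕ) : 0 ≤ gab a b x := by
  unfold gab; split
  · exact Real.sqrt_nonneg _
  · exact le_refl 0

lemma gab_le {a b : ℝ} (ha : 0 ≤ a) (hab : a ≤ b) (x : ℕ) :
    gab a b x ≤ Real.sqrt (a * b) := by
  have hb : 0 ≤ b := ha.trans hab
  unfold gab; split
  · apply Real.sqrt_le_sqrt
    have h1 : 0 ≤ min (x:ℝ) a := le_min (by positivity) ha
    have h2 : 0 ≤ min (x:ℝ) b := le_min (by positivity) hb
    exact mul_le_mul (min_le_right _ _) (min_le_right _ _) h2 ha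
  · exact Real.sqrt_nonneg _

lemma gab_mono {a b : ℝ} (ha : 0 ≤ a) (hab : a ≤ b) (k : ℕ) :
    gab a b k ≤ gab a b (k+1) := by
  by_cases hk : 4 ≤ k
  · unfold gab
    rw [if_pos hk, if_pos (by omega : 4 ≤ k+1)]
    apply Real.sqrt_le_sqrt
    have hcast : (k:ℝ) ≤ ((k+1:ℕ):ℝ) := by push_cast; linarith
    have h1 : 0 ≤ min (k:ℝ) a := le_min (by positivity) ha
    have h2 : 0 ≤ min (k:ℝ) b := le_min (by positivity) (ha.trans hab)
    exact mul_le_mul (min_le_min hcast le_rfl) (min_le_min hcast le_rfl) h2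
      (le_trans h1 (min_le_min hcast le_rfl))
  · calc gab a b k = 0 := by unfold gab; rw [if_neg hk]
    _ ≤ gab a b (k+1) := gab_nonneg a b (k+1)

lemma min_ratio {c : ℝ} (hc : 0 ≤ c) {k : ℕ} (hk : 1 ≤ k) :
    (k:ℝ) * min ((k+1:ℕ):ℝ) c ≤ ((k:ℝ)+1) * min (k:ℝ) c := by
  have hk1 : (1:ℝ) ≤ (k:ℝ) := by exact_mod_cast hk
  rcases le_total c (k:ℝ) with h | h
  · rw [min_eq_right h, min_eq_right (by push_cast; linarith)]
    nlinarith
  · rw [min_eq_left h]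
    have h1 : min ((k+1:ℕ):ℝ) c ≤ (k:ℝ)+1 := by
      refine le_trans (min_le_left _ _) ?_
      push_cast; exact le_refl _
    nlinarith [mul_le_mul_of_nonneg_left h1 (by positivity : (0:ℝ) ≤ (k:ℝ))]

lemma gab_sq {a b : ℝ} (ha : 0 ≤ a) (hab : a ≤ b) {x : ℕ} (hx : 4 ≤ x) :
    gab a b x ^ 2 = min (x:ℝ) a * min (x:ℝ) b := by
  have h1 : 0 ≤ min (x:ℝ) a := le_min (by positivity) ha
  have h2 : 0 ≤ min (x:ℝ) b := le_min (by positivity) (ha.trans hab)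
  unfold gab; rw [if_pos hx, Real.sq_sqrt (mul_nonneg h1 h2)]

lemma gab_ratio {a b : ℝ} (ha : 0 ≤ a) (hab : a ≤ b) {k : ℕ} (hk : 4 ≤ k) :
    (k:ℝ) * gab a b (k+1) ≤ ((k:ℝ)+1) * gab a b k := by
  have hb : 0 ≤ b := ha.trans hab
  have hk1 : (1:ℕ) ≤ k := by omega
  have h1 := min_ratio ha hk1
  have h2 := min_ratio hb hk1
  have hA0 : 0 ≤ min (k:ℝ) a := le_min (by positivity) ha
  have hB0 : 0 ≤ min (k:ℝ) b := le_min (by positivity) hb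
  have hA1 : 0 ≤ min ((k+1:ℕ):ℝ) a := le_min (by positivity) ha
  have hB1 : 0 ≤ min ((k+1:ℕ):ℝ) b := le_min (by positivity) hb
  have knn : (0:ℝ) ≤ (k:ℝ) := by positivity
  have h12 : ((k:ℝ) * min ((k+1:ℕ):ℝ) a) * ((k:ℝ) * min ((k+1:ℕ):ℝ) b) ≤
      (((k:ℝ)+1) * min (k:ℝ) a) * (((k:ℝ)+1) * min (k:ℝ) b) :=
    mul_le_mul h1 h2 (mul_nonneg knn hB1) (mul_nonneg (by linarith) hA0)
  have e1 := gab_sq ha hab (by omega : 4 ≤ k+1)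
  have e0 := gab_sq ha hab hk
  have hsq : ((k:ℝ) * gab a b (k+1))^2 ≤ (((k:ℝ)+1) * gab a b k)^2 := by
    rw [mul_pow, mul_pow, e1, e0]; nlinarith [h12]
  have h3 := Real.sqrt_le_sqrt hsq
  rwa [Real.sqrt_sq (mul_nonneg knn (gab_nonneg a b (k+1))),
    Real.sqrt_sq (mul_nonneg (by linarith) (gab_nonneg a b k))] at h3

lemma fab_succ_sub {a b : ℝ} (ha : 0 ≤ a) (hab : a ≤ b) (k : ℕ) :
    fab a b (k+1) - fab a b k ≤ 4 * gab a b (k+1) := by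
  rcases lt_or_ge k 3 with hk | hk
  · have h1 : ¬ (4 ≤ k+1) := by omega
    have h2 : ¬ (4 ≤ k) := by omega
    unfold fab gab
    rw [if_neg h1, if_neg h1, if_neg h2]
    norm_num
  rcases eq_or_lt_of_le hk with hk3 | hk4
  · have hk3' : k = 3 := hk3.symm
    subst hk3'
    have h2 : ¬ (4 ≤ 3) := by omega
    rw [fab_eq_mul, fab_eq_mul]
    unfold gab
    rw [if_neg h2]
    push_cast
    norm_num
  · have hk4' : 4 ≤ k := by omega
    rw [fab_eq_mul, fab_eq_mul]
    have hr := gab_ratio ha hab hk4'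
    have hg0 := gab_nonneg a b k
    have hg1 := gab_nonneg a b (k+1)
    have hkr : (4:ℝ) ≤ (k:ℝ) := by exact_mod_cast hk4'
    set g0 := gab a b k
    set g1 := gab a b (k+1)
    have h5 : ((k:ℝ)-3) * ((k:ℝ) * g1) ≤ ((k:ℝ)-3) * (((k:ℝ)+1) * g0) :=
      mul_le_mul_of_nonneg_left hr (by linarith)
    have h6 : ((k:ℝ)-3) * (((k:ℝ)+1) * g0) ≤ (k:ℝ) * ((k:ℝ) * g0) := by nlinarith
    have h7 : (k:ℝ) * (((k:ℝ)-3) * g1) ≤ (k:ℝ) * ((k:ℝ) * g0) := by nlinarith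
    have h8 := le_of_mul_le_mul_left h7 (by linarith : (0:ℝ) < (k:ℝ))
    push_cast
    linarith

lemma fab_nn (a b : ℝ) (x : ℕ) : 0 ≤ fab a b x := by
  rw [fab_eq_mul]
  exact mul_nonneg (by positivity) (gab_nonneg a b x)

lemma fab_mono {a b : ℝ} (ha : 0 ≤ a) (hab : a ≤ b) : Monotone (fab a b) := by
  apply monotone_nat_of_le_succ
  intro k
  rw [fab_eq_mul, fab_eq_mul]
  have h1 : (k:ℝ) ≤ ((k+1:ℕ):ℝ) := by push_cast; linarith
  exact mul_le_mul h1 (gab_mono ha hab k) (gab_nonneg a b k) (by positivity)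

/-! ### Poisson side -/

lemma psum (r : ℝ≥0) : ∑' k : ℕ, poissonPMFReal r k = 1 := (poissonPMFRealSum r).tsum_eq

lemma psummable (r : ℝ≥0) : Summable (poissonPMFReal r) := (poissonPMFRealSum r).summable

lemma summable_quad (r : ℝ≥0) :
    Summable (fun k : ℕ => ((k:ℝ)^2+1) * poissonPMFReal r k) := by
  refine Summable.of_nonneg_of_le (fun k => mul_nonneg (by positivity) poissonPMFReal_nonneg) (fun k => ?_)
    (((Real.summable_pow_div_factorial (4*(r:ℝ))).mul_left (2 * Real.exp (-(r:ℝ)))))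
  have hk2 : (k:ℝ) ≤ 2^k := by exact_mod_cast (Nat.lt_two_pow_self (n := k)).le
  have hsq : (k:ℝ)^2 ≤ ((2:ℝ)^k)^2 := by
    apply pow_le_pow_left₀ (by positivity) hk2
  have h4 : ((2:ℝ)^k)^2 = 4^k := by
    rw [← pow_mul, mul_comm, pow_mul]; norm_num
  have h14 : (1:ℝ) ≤ 4^k := by
    have := pow_le_pow_left₀ (by norm_num : (0:ℝ) ≤ 1) (by norm_num : (1:ℝ) ≤ 4) k
    simpa using this
  have h1 : ((k:ℝ)^2 + 1) ≤ 2 * 4^k := by rw [h4] at hsq; linarith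
  unfold poissonPMFReal
  have hrhs : 2 * Real.exp (-(r:ℝ)) * ((4*(r:ℝ))^k / (k.factorial : ℝ)) =
      (2 * 4^k) * (Real.exp (-(r:ℝ)) * (r:ℝ)^k / (k.factorial : ℝ)) := by
    rw [mul_pow]; ring
  rw [hrhs]
  apply mul_le_mul_of_nonneg_right h1
  positivity

lemma msummable (r : ℝ≥0) (F : ℕ → ℝ) (C : ℝ)
    (h : ∀ k : ℕ, |F k| ≤ C * ((k:ℝ)^2+1)) :
    Summable (fun k => F k * poissonPMFReal r k) := by
  refine Summable.of_norm_bounded (g := fun k => C * (((k:ℝ)^2+1) * poissonPMFReal r k))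
    ((summable_quad r).mul_left C) (fun k => ?_)
  have hp : 0 ≤ poissonPMFReal r k := poissonPMFReal_nonneg
  show ‖F k * poissonPMFReal r k‖ ≤ C * (((k:ℝ)^2+1) * poissonPMFReal r k)
  rw [Real.norm_eq_abs, abs_mul, abs_of_nonneg hp, ← mul_assoc]
  exact mul_le_mul_of_nonneg_right (h k) hp

lemma pshift (r : ℝ≥0) (h : ℕ → ℝ)
    (hs : Summable (fun k : ℕ => (k:ℝ) * h k * poissonPMFReal r k)) :
    ∑' k : ℕ, (k:ℝ) * h k * poissonPMFReal r k
      = r * ∑' k : ℕ, h (k+1) * poissonPMFReal r k := by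
  rw [Summable.tsum_eq_zero_add hs]
  have e : ∀ k : ℕ, ((k+1:ℕ):ℝ) * h (k+1) * poissonPMFReal r (k+1)
      = (r:ℝ) * (h (k+1) * poissonPMFReal r k) := by
    intro k
    unfold poissonPMFReal
    have hfact : (((k+1).factorial : ℕ) : ℝ) = ((k:ℝ)+1) * (k.factorial : ℝ) := by
      rw [Nat.factorial_succ]; push_cast; ring
    have hkne : ((k.factorial : ℕ) : ℝ) ≠ 0 := Nat.cast_ne_zero.mpr (Nat.factorial_ne_zero k)
    have hk1 : ((k:ℝ)+1) ≠ 0 := by positivity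
    rw [hfact, pow_succ]
    push_cast
    field_simp
  simp only [Nat.cast_zero, zero_mul, zero_add]
  rw [tsum_congr e, tsum_mul_left]

lemma cheb (r : ℝ≥0) (F G : ℕ → ℝ) (hF : Monotone F) (hG : Monotone G)
    (s1 : Summable (fun k => F k * poissonPMFReal r k))
    (s2 : Summable (fun k => G k * poissonPMFReal r k))
    (s3 : Summable (fun k => F k * G k * poissonPMFReal r k)) :
    (∑' k : ℕ, F k * poissonPMFReal r k) * (∑' k : ℕ, G k * poissonPMFReal r k)
      ≤ ∑' k : ℕ, F k * G k * poissonPMFReal r k := by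
  set p := poissonPMFReal r with hpdef
  set A := ∑' k : ℕ, F k * p k with hA
  set B := ∑' k : ℕ, G k * p k with hB
  set T := ∑' k : ℕ, F k * G k * p k with hT
  have hp : ∀ k : ℕ, 0 ≤ p k := fun k => poissonPMFReal_nonneg
  have hP : ∑' k : ℕ, p k = 1 := psum r
  have key : ∀ j : ℕ, 0 ≤ T - F j * B - G j * A + F j * G j := by
    intro j
    have hterm : ∀ k : ℕ, 0 ≤ (F k - F j) * (G k - G j) * p k := by
      intro k
      apply mul_nonneg _ (hp k)
      rcases le_total j k with h | h
      · exact mul_nonneg (sub_nonneg.mpr (hF h)) (sub_nonneg.mpr (hG h))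
      · nlinarith [sub_nonpos.mpr (hF h), sub_nonpos.mpr (hG h)]
    have h0 : 0 ≤ ∑' k : ℕ, (F k - F j) * (G k - G j) * p k := tsum_nonneg hterm
    have e1 : ∀ k : ℕ, (F k - F j) * (G k - G j) * p k
        = (F k * G k * p k - F j * (G k * p k))
          - (G j * (F k * p k) - (F j * G j) * p k) := fun k => by ring
    have hexp : ∑' k : ℕ, (F k - F j) * (G k - G j) * p k
        = T - F j * B - G j * A + F j * G j := by
      rw [tsum_congr e1,
        Summable.tsum_sub (s3.sub (s2.mul_left (F j))) ((s1.mul_left (G j)).sub ((psummable r).mul_left (F j * G j))),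
        Summable.tsum_sub s3 (s2.mul_left (F j)),
        Summable.tsum_sub (s1.mul_left (G j)) ((psummable r).mul_left (F j * G j)),
        tsum_mul_left, tsum_mul_left, tsum_mul_left, hP]
      ring
    linarith [hexp ▸ h0]
  have outer : 0 ≤ ∑' j : ℕ, (T - F j * B - G j * A + F j * G j) * p j :=
    tsum_nonneg (fun j => mul_nonneg (key j) (hp j))
  have e2 : ∀ j : ℕ, (T - F j * B - G j * A + F j * G j) * p j
      = (T * p j - B * (F j * p j)) - (A * (G j * p j) - F j * G j * p j) := fun j => by ring
  have outer_eq : ∑' j : ℕ, (T - F j * B - G j * A + F j * G j) * p j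
      = 2 * T - 2 * (A * B) := by
    rw [tsum_congr e2,
      Summable.tsum_sub (((psummable r).mul_left T).sub (s1.mul_left B)) ((s2.mul_left A).sub s3),
      Summable.tsum_sub ((psummable r).mul_left T) (s1.mul_left B),
      Summable.tsum_sub (s2.mul_left A) s3,
      tsum_mul_left, tsum_mul_left, tsum_mul_left, hP]
    ring
  rw [outer_eq] at outer
  linarith

theorem stmt_11 :
    ∃ C : ℝ, 0 < C ∧ ∀ (r : ℝ≥0) (a b : ℝ), 0 ≤ a → a ≤ b →
      pvar r (fab a b) ≤
        C * max (a * b) (max (Real.sqrt a * b) (Real.sqrt (a * b))) *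
          pev r (fab a b) := by
  refine ⟨16, by norm_num, ?_⟩
  intro r a b ha hab
  have hb : 0 ≤ b := ha.trans hab
  set s := Real.sqrt (a*b) with hsdef
  have hs0 : 0 ≤ s := Real.sqrt_nonneg _
  set p := poissonPMFReal r with hpdef
  have hp : ∀ k : ℕ, 0 ≤ p k := fun k => poissonPMFReal_nonneg
  set F := fab a b with hFdef
  set G : ℕ → ℝ := fun k => 4*s*(k:ℝ) - F k with hGdef
  -- pointwise bounds
  have hgle : ∀ k : ℕ, gab a b k ≤ s := gab_le ha hab
  have hgnn : ∀ k : ℕ, 0 ≤ gab a b k := gab_nonneg a b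
  have hFnn : ∀ k : ℕ, 0 ≤ F k := fab_nn a b
  have hFk : ∀ k : ℕ, F k ≤ s * (k:ℝ) := by
    intro k
    rw [hFdef, fab_eq_mul]
    calc (k:ℝ) * gab a b k ≤ (k:ℝ) * s :=
          mul_le_mul_of_nonneg_left (hgle k) (by positivity)
      _ = s * (k:ℝ) := mul_comm _ _
  have hksq : ∀ k : ℕ, (k:ℝ) ≤ (k:ℝ)^2 + 1 := by
    intro k
    nlinarith [sq_nonneg ((k:ℝ)-1), Nat.cast_nonneg (α := ℝ) k]
  -- summability facts
  have sF : Summable (fun k => F k * p k) := by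
    refine msummable r F s (fun k => ?_)
    rw [abs_of_nonneg (hFnn k)]
    calc F k ≤ s * (k:ℝ) := hFk k
      _ ≤ s * ((k:ℝ)^2+1) := mul_le_mul_of_nonneg_left (hksq k) hs0
  have sF2 : Summable (fun k => F k^2 * p k) := by
    refine msummable r (fun k => F k^2) (s^2) (fun k => ?_)
    rw [abs_of_nonneg (sq_nonneg _)]
    show F k^2 ≤ s^2*((k:ℝ)^2+1)
    have h1 : F k^2 ≤ (s*(k:ℝ))^2 := pow_le_pow_left₀ (hFnn k) (hFk k) 2
    have h2 : (0:ℝ) ≤ (k:ℝ)^2 := sq_nonneg _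
    nlinarith [sq_nonneg s]
  have skF : Summable (fun k : ℕ => (k:ℝ) * F k * p k) := by
    refine msummable r (fun k : ℕ => (k:ℝ) * F k) s (fun k => ?_)
    have hknn : (0:ℝ) ≤ (k:ℝ) := Nat.cast_nonneg k
    rw [abs_of_nonneg (mul_nonneg hknn (hFnn k))]
    calc (k:ℝ) * F k ≤ (k:ℝ) * (s * (k:ℝ)) :=
          mul_le_mul_of_nonneg_left (hFk k) hknn
      _ = s * (k:ℝ)^2 := by ring
      _ ≤ s * ((k:ℝ)^2+1) := by nlinarith
  have sG : Summable (fun k => G k * p k) := by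
    refine msummable r G (5*s) (fun k => ?_)
    have hknn : (0:ℝ) ≤ (k:ℝ) := Nat.cast_nonneg k
    have h1 : |G k| ≤ |4*s*(k:ℝ)| + |F k| := by
      rw [hGdef]
      have h := abs_add_le (4*s*(k:ℝ)) (-(F k))
      rw [abs_neg] at h
      calc |4*s*(k:ℝ) - F k| = |4*s*(k:ℝ) + -(F k)| := by ring_nf
        _ ≤ |4*s*(k:ℝ)| + |F k| := h
    have h2 : |4*s*(k:ℝ)| = 4*s*(k:ℝ) := abs_of_nonneg (mul_nonneg (mul_nonneg (by norm_num) hs0) (Nat.cast_nonneg k))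
    have h3 : |F k| = F k := abs_of_nonneg (hFnn k)
    have h4 : F k ≤ s * (k:ℝ) := hFk k
    have h5 : (k:ℝ) ≤ (k:ℝ)^2+1 := hksq k
    calc |G k| ≤ 4*s*(k:ℝ) + F k := by rw [h2, h3] at h1; exact h1
      _ ≤ 5*s*((k:ℝ)^2+1) := by nlinarith
  have sFG : Summable (fun k => F k * G k * p k) := by
    refine msummable r (fun k => F k * G k) (5*s^2) (fun k => ?_)
    have hknn : (0:ℝ) ≤ (k:ℝ) := Nat.cast_nonneg k
    have h1 : |F k * G k| ≤ (s*(k:ℝ)) * (5*s*(k:ℝ)) := by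
      rw [abs_mul]
      have hG : |G k| ≤ 5*s*(k:ℝ) := by
        rw [hGdef]
        have h := abs_add_le (4*s*(k:ℝ)) (-(F k))
        rw [abs_neg] at h
        have h2 : |4*s*(k:ℝ)| = 4*s*(k:ℝ) := abs_of_nonneg (mul_nonneg (mul_nonneg (by norm_num) hs0) (Nat.cast_nonneg k))
        have h3 : |F k| = F k := abs_of_nonneg (hFnn k)
        have h4 : F k ≤ s * (k:ℝ) := hFk k
        calc |4*s*(k:ℝ) - F k| = |4*s*(k:ℝ) + -(F k)| := by ring_nf
          _ ≤ |4*s*(k:ℝ)| + |F k| := h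
          _ ≤ 5*s*(k:ℝ) := by rw [h2, h3]; nlinarith
      have hfa : |F k| ≤ s*(k:ℝ) := by rw [abs_of_nonneg (hFnn k)]; exact hFk k
      exact mul_le_mul hfa hG (abs_nonneg _) (mul_nonneg hs0 (Nat.cast_nonneg k))
    calc |F k * G k| ≤ (s*(k:ℝ)) * (5*s*(k:ℝ)) := h1
      _ = 5*s^2*(k:ℝ)^2 := by ring
      _ ≤ 5*s^2*((k:ℝ)^2+1) := by nlinarith [sq_nonneg s, sq_nonneg ((k:ℝ))]
  have sFsucc : Summable (fun k => F (k+1) * p k) := by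
    refine msummable r (fun k => F (k+1)) (2*s) (fun k => ?_)
    have hknn : (0:ℝ) ≤ (k:ℝ) := Nat.cast_nonneg k
    rw [abs_of_nonneg (hFnn (k+1))]
    calc F (k+1) ≤ s * ((k+1:ℕ):ℝ) := hFk (k+1)
      _ ≤ 2*s*((k:ℝ)^2+1) := by push_cast; nlinarith [sq_nonneg ((k:ℝ)-1)]
  have sg1 : Summable (fun k => 4*gab a b (k+1) * p k) := by
    refine msummable r (fun k => 4*gab a b (k+1)) (4*s) (fun k => ?_)
    rw [abs_of_nonneg (mul_nonneg (by norm_num) (hgnn (k+1)))]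
    have := hgle (k+1)
    have h1 : (1:ℝ) ≤ (k:ℝ)^2+1 := by nlinarith [sq_nonneg ((k:ℝ))]
    nlinarith [hgnn (k+1)]
  have sid : Summable (fun k : ℕ => (k:ℝ) * p k) := by
    have h := msummable r (fun k : ℕ => (k:ℝ)) 1 (fun k => by
      rw [abs_of_nonneg (Nat.cast_nonneg k)]
      nlinarith [hksq k])
    exact h
  have sdiff : Summable (fun k => (F (k+1) - F k) * p k) := by
    refine Summable.congr (sFsucc.sub sF) (fun k => ?_)
    ring
  -- main quantities
  set Ef := ∑' k : ℕ, F k * p k with hEfdef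
  have hEfnn : 0 ≤ Ef := tsum_nonneg (fun k => mul_nonneg (hFnn k) (hp k))
  have hEX : ∑' k : ℕ, (k:ℝ) * p k = (r:ℝ) := by
    have hs1 : Summable (fun k : ℕ => (k:ℝ) * (1:ℝ) * p k) := by
      refine Summable.congr sid (fun k => ?_); ring
    have h1 := pshift r (fun _ => 1) hs1
    calc ∑' k : ℕ, (k:ℝ) * p k = ∑' k : ℕ, (k:ℝ) * (1:ℝ) * p k :=
          tsum_congr (fun k => by ring)
      _ = (r:ℝ) * ∑' k : ℕ, (1:ℝ) * p k := h1
      _ = (r:ℝ) * ∑' k : ℕ, p k := by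
          rw [tsum_congr (fun k => one_mul (p k))]
      _ = (r:ℝ) := by rw [hpdef, psum r, mul_one]
  have hXF : ∑' k : ℕ, (k:ℝ) * F k * p k = (r:ℝ) * ∑' k : ℕ, F (k+1) * p k :=
    pshift r F skF
  have hgF : Ef = (r:ℝ) * ∑' k : ℕ, gab a b (k+1) * p k := by
    have hsg : Summable (fun k : ℕ => (k:ℝ) * gab a b k * p k) := by
      refine Summable.congr sF (fun k => ?_)
      rw [hFdef, fab_eq_mul]
    calc Ef = ∑' k : ℕ, (k:ℝ) * gab a b k * p k := by
          rw [hEfdef]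
          exact tsum_congr (fun k => by rw [hFdef, fab_eq_mul])
      _ = (r:ℝ) * ∑' k : ℕ, gab a b (k+1) * p k := pshift r (gab a b) hsg
  -- monotonicity of G
  have hGmono : Monotone G := by
    apply monotone_nat_of_le_succ
    intro k
    have h1 : F (k+1) - F k ≤ 4 * gab a b (k+1) := fab_succ_sub ha hab k
    have h2 : gab a b (k+1) ≤ s := hgle (k+1)
    rw [hGdef]
    simp only
    push_cast
    linarith
  -- Chebyshev association
  have hch := cheb r F G (fab_mono ha hab) hGmono sF sG sFG
  have hB : ∑' k : ℕ, G k * p k = 4*s*(r:ℝ) - Ef := by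
    calc ∑' k : ℕ, G k * p k
        = ∑' k : ℕ, (4*s*((k:ℝ) * p k) - F k * p k) :=
          tsum_congr (fun k => by rw [hGdef]; ring)
      _ = (∑' k : ℕ, 4*s*((k:ℝ) * p k)) - ∑' k : ℕ, F k * p k :=
          Summable.tsum_sub (sid.mul_left (4*s)) sF
      _ = 4*s*(r:ℝ) - Ef := by rw [tsum_mul_left, hEX, hEfdef]
  have hT : ∑' k : ℕ, F k * G k * p k
      = 4*s*(∑' k : ℕ, (k:ℝ) * F k * p k) - ∑' k : ℕ, F k^2 * p k := by
    calc ∑' k : ℕ, F k * G k * p k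
        = ∑' k : ℕ, (4*s*((k:ℝ) * F k * p k) - F k^2 * p k) :=
          tsum_congr (fun k => by rw [hGdef]; ring)
      _ = (∑' k : ℕ, 4*s*((k:ℝ) * F k * p k)) - ∑' k : ℕ, F k^2 * p k :=
          Summable.tsum_sub (skF.mul_left (4*s)) sF2
      _ = _ := by rw [tsum_mul_left]
  rw [hB, hT] at hch
  -- increments bound
  have hsum_local : (∑' k : ℕ, F (k+1) * p k) - Ef = ∑' k : ℕ, (F (k+1) - F k) * p k := by
    rw [hEfdef, ← Summable.tsum_sub sFsucc sF]
    exact tsum_congr (fun k => by ring)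
  have hinc : ∑' k : ℕ, (F (k+1) - F k) * p k ≤ ∑' k : ℕ, 4*gab a b (k+1) * p k := by
    refine Summable.tsum_le_tsum (fun k => ?_) sdiff sg1
    exact mul_le_mul_of_nonneg_right (fab_succ_sub ha hab k) (hp k)
  have hg1sum : ∑' k : ℕ, 4*gab a b (k+1) * p k = 4 * ∑' k : ℕ, gab a b (k+1) * p k := by
    rw [← tsum_mul_left]
    exact tsum_congr (fun k => by ring)
  -- put everything together
  have hvar : pvar r (fab a b) = (∑' k : ℕ, F k^2 * p k) - Ef^2 := by
    rw [pvar, pev, pev, hEfdef, hFdef, hpdef]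
  have step1 : (∑' k : ℕ, F k^2 * p k) - Ef^2
      ≤ 4*s*((r:ℝ) * ((∑' k : ℕ, F (k+1) * p k) - Ef)) := by
    have hexp : Ef * (4*s*(r:ℝ) - Ef) = 4*s*(r:ℝ)*Ef - Ef^2 := by ring
    rw [hexp] at hch
    rw [hXF] at hch
    nlinarith [hch]
  have step2 : (r:ℝ) * ((∑' k : ℕ, F (k+1) * p k) - Ef) ≤ 4 * Ef := by
    rw [hsum_local]
    have h1 : (r:ℝ) * (∑' k : ℕ, (F (k+1) - F k) * p k)
        ≤ (r:ℝ) * (∑' k : ℕ, 4*gab a b (k+1) * p k) :=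
      mul_le_mul_of_nonneg_left hinc (r.coe_nonneg)
    calc (r:ℝ) * (∑' k : ℕ, (F (k+1) - F k) * p k)
        ≤ (r:ℝ) * (∑' k : ℕ, 4*gab a b (k+1) * p k) := h1
      _ = 4 * ((r:ℝ) * ∑' k : ℕ, gab a b (k+1) * p k) := by rw [hg1sum]; ring
      _ = 4 * Ef := by rw [← hgF]
  have hfinal : pvar r (fab a b) ≤ 16 * s * Ef := by
    rw [hvar]
    calc (∑' k : ℕ, F k^2 * p k) - Ef^2
        ≤ 4*s*((r:ℝ) * ((∑' k : ℕ, F (k+1) * p k) - Ef)) := step1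
      _ ≤ 4*s*(4*Ef) := mul_le_mul_of_nonneg_left step2 (mul_nonneg (by norm_num) hs0)
      _ = 16 * s * Ef := by ring
  have hsM : s ≤ max (a * b) (max (Real.sqrt a * b) (Real.sqrt (a * b))) := by
    rw [hsdef]
    exact le_trans (le_max_right (Real.sqrt a * b) (Real.sqrt (a*b)))
      (le_max_right (a*b) (max (Real.sqrt a * b) (Real.sqrt (a*b))))
  have hpev : pev r (fab a b) = Ef := by rw [pev, hEfdef, hFdef, hpdef]
  rw [hpev]
  calc pvar r (fab a b) ≤ 16 * s * Ef := hfinal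
    _ ≤ 16 * max (a * b) (max (Real.sqrt a * b) (Real.sqrt (a * b))) * Ef := by
        have := mul_le_mul_of_nonneg_right hsM hEfnn
        nlinarith [this]
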